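/- arXiv:2202.08209 — 7 statements merged into one kernel-verified Lean document; each statement's English description precedes it below -/
import Mathlib

section
/- Let p : V → ℝ be a probabilistic model on the EPR scenario (p ≥ 0 and Σ_{a,b} p(a,b,x,y) = 1 for all (x,y)). Then p satisfies the no-disturbance (ND) condition if and only if Σ_{v ∈ e} p(v) = 1 for every Foulis–Randall edge e; equivalently, if and only if the sums Σ_{v ∈ e} p(v) over all Foulis–Randall edges e are all equal. -/
/-- The vertex set of the EPR (Bell/CHSH) contextuality scenario:
`(a, b, x, y)` records outcomes `a, b` of parties A, B under settings `x, y`. -/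
abbrev EPRVertex : Type := Fin 2 × Fin 2 × Fin 2 × Fin 2

/-- The Cartesian edge `e_{x,y} = {(a,b,x,y) : a,b}`. -/
def cartEdge (x y : Fin 2) : Finset EPRVertex :=
  Finset.univ.filter fun v => v.2.2.1 = x ∧ v.2.2.2 = y

/-- A→B measurement-protocol edge `E^{AB}_{x,f} = {(a,b,x,f a) : a,b}`. -/
def edgeAB (x : Fin 2) (f : Fin 2 → Fin 2) : Finset EPRVertex :=
  Finset.univ.filter fun v => v.2.2.1 = x ∧ v.2.2.2 = f v.1

/-- B→A measurement-protocol edge `E^{BA}_{y,g} = {(a,b,g b,y) : a,b}`. -/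
def edgeBA (y : Fin 2) (g : Fin 2 → Fin 2) : Finset EPRVertex :=
  Finset.univ.filter fun v => v.2.2.2 = y ∧ v.2.2.1 = g v.2.1

/-- The Foulis–Randall edges of the EPR scenario. -/
def FREdges : Finset (Finset EPRVertex) :=
  (Finset.univ.image fun xy : Fin 2 × Fin 2 => cartEdge xy.1 xy.2) ∪
  (Finset.univ.image fun xf : Fin 2 × (Fin 2 → Fin 2) => edgeAB xf.1 xf.2) ∪
  (Finset.univ.image fun yg : Fin 2 × (Fin 2 → Fin 2) => edgeBA yg.1 yg.2)

/-- `p` is a probabilistic model on the EPR scenario. -/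
def IsProbModel (p : EPRVertex → ℝ) : Prop :=
  (∀ v, 0 ≤ p v) ∧ ∀ x y : Fin 2, ∑ a : Fin 2, ∑ b : Fin 2, p (a, b, x, y) = 1

/-- The no-disturbance (ND) condition. -/
def IsND (p : EPRVertex → ℝ) : Prop :=
  (∀ a x : Fin 2, ∑ b : Fin 2, p (a, b, x, 0) = ∑ b : Fin 2, p (a, b, x, 1)) ∧
  (∀ b y : Fin 2, ∑ a : Fin 2, p (a, b, 0, y) = ∑ a : Fin 2, p (a, b, 1, y))

/-- Indicator function of a finite set of vertices. -/
def indicator (c : Finset EPRVertex) : EPRVertex → ℝ := fun v => if v ∈ c then 1 else 0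

/-- A deterministic model: one outcome in each Cartesian edge. -/
def IsDetModel (c : Finset EPRVertex) : Prop :=
  ∀ x y : Fin 2, (c ∩ cartEdge x y).card = 1

/-- The disturbance `D(c) = Σ_e ||c ∩ e| − 1|` over all Foulis–Randall edges. -/
def disturbance (c : Finset EPRVertex) : ℕ :=
  ∑ e ∈ FREdges, (((c ∩ e).card : ℤ) - 1).natAbs

/-- Correlation of `p` at settings `(x, y)`. -/
def corr (x y : Fin 2) (p : EPRVertex → ℝ) : ℝ :=
  ∑ a : Fin 2, ∑ b : Fin 2, (-1 : ℝ) ^ ((a : ℕ) + (b : ℕ)) * p (a, b, x, y)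

/-- The Bell parameter `B(p)`. -/
noncomputable def Bell (p : EPRVertex → ℝ) : ℝ :=
  Finset.univ.sup' Finset.univ_nonempty fun xy : Fin 2 × Fin 2 =>
    |(∑ x' : Fin 2, ∑ y' : Fin 2, corr x' y' p) - 2 * corr xy.1 xy.2 p|

/-!
Every protocol edge sums to one exactly when the local marginals do not depend on the remote
setting. Indeed, summing `p` over `E^{AB}_{x,f}` gives `Σ_a P_A(a | x, f a)`, and for a family of
normalised distributions `P_A(· | x, y)` such a "diagonal" sum equals one for every choice
function `f` iff `P_A(a | x, y)` is independent of `y`: compare `f` with its update at one point.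
The Cartesian edges sum to one by normalisation, and since they are Foulis–Randall edges,
"all edge sums equal" is the same as "all edge sums equal one".
-/

lemma forall_sum_comp_eq_iff {α β : Type*} [Fintype α] [DecidableEq α] [Nonempty β]
    {q : α → β → ℝ} {c : ℝ} (hq : ∀ y, ∑ a, q a y = c) :
    (∀ f : α → β, ∑ a, q a (f a) = c) ↔ ∀ a y y', q a y = q a y' := by
  constructor
  · intro h a y y'
    have hrest : ∑ b ∈ Finset.univ.erase a, q b (Function.update (fun _ => y') a y b) =
        ∑ b ∈ Finset.univ.erase a, q b y' :=
      Finset.sum_congr rfl fun b hb => by rw [Function.update_of_ne (Finset.ne_of_mem_erase hb)]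
    have key := (h (Function.update (fun _ => y') a y)).trans (h fun _ => y').symm
    rwa [← Finset.add_sum_erase _ _ (Finset.mem_univ a),
      ← Finset.add_sum_erase _ _ (Finset.mem_univ a), Function.update_self, hrest,
      add_left_inj] at key
  · intro h f
    obtain ⟨y⟩ := ‹Nonempty β›
    rw [← hq y]
    exact Finset.sum_congr rfl fun a _ => h a _ _

lemma Fin.forall_two_eq_iff {γ : Type*} {g : Fin 2 → γ} :
    (∀ y y', g y = g y') ↔ g 0 = g 1 :=
  ⟨fun h => h 0 1, fun h y y' => by fin_cases y <;> fin_cases y' <;> simp [h]⟩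

lemma sum_cartEdge (p : EPRVertex → ℝ) (x y : Fin 2) :
    ∑ v ∈ cartEdge x y, p v = ∑ a, ∑ b, p (a, b, x, y) := by
  simp only [cartEdge, Finset.sum_filter, Fintype.sum_prod_type, ite_and, Finset.sum_ite_irrel,
    Finset.sum_const_zero, Finset.sum_ite_eq', Finset.mem_univ, if_true]

lemma sum_edgeAB (p : EPRVertex → ℝ) (x : Fin 2) (f : Fin 2 → Fin 2) :
    ∑ v ∈ edgeAB x f, p v = ∑ a, ∑ b, p (a, b, x, f a) := by
  simp only [edgeAB, Finset.sum_filter, Fintype.sum_prod_type, ite_and, Finset.sum_ite_irrel,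
    Finset.sum_const_zero, Finset.sum_ite_eq', Finset.mem_univ, if_true]

lemma sum_edgeBA (p : EPRVertex → ℝ) (y : Fin 2) (g : Fin 2 → Fin 2) :
    ∑ v ∈ edgeBA y g, p v = ∑ a, ∑ b, p (a, b, g b, y) := by
  simp only [edgeBA, Finset.sum_filter, Fintype.sum_prod_type, ite_and, Finset.sum_ite_eq',
    Finset.mem_univ, if_true]

lemma forall_mem_FREdges {P : Finset EPRVertex → Prop} :
    (∀ e ∈ FREdges, P e) ↔
      (∀ x y, P (cartEdge x y)) ∧ (∀ x f, P (edgeAB x f)) ∧ ∀ y g, P (edgeBA y g) := by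
  simp only [FREdges, Finset.forall_mem_union, Finset.forall_mem_image, Finset.mem_univ,
    forall_const, Prod.forall, and_assoc]

lemma cartEdge_mem_FREdges (x y : Fin 2) : cartEdge x y ∈ FREdges :=
  Finset.mem_union_left _ <| Finset.mem_union_left _ <|
    Finset.mem_image_of_mem (fun xy : Fin 2 × Fin 2 => cartEdge xy.1 xy.2) (Finset.mem_univ (x, y))

lemma forall_edgeAB_sum_eq_one_iff {p : EPRVertex → ℝ}
    (hp : ∀ x y, ∑ a, ∑ b, p (a, b, x, y) = 1) :
    (∀ x f, ∑ v ∈ edgeAB x f, p v = 1) ↔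
      ∀ a x, ∑ b, p (a, b, x, 0) = ∑ b, p (a, b, x, 1) := by
  refine (forall_congr' fun x => ?_).trans forall_comm
  simp only [sum_edgeAB]
  rw [forall_sum_comp_eq_iff (q := fun a y => ∑ b, p (a, b, x, y)) (hp x)]
  exact forall_congr' fun a => Fin.forall_two_eq_iff

lemma forall_edgeBA_sum_eq_one_iff {p : EPRVertex → ℝ}
    (hp : ∀ x y, ∑ a, ∑ b, p (a, b, x, y) = 1) :
    (∀ y g, ∑ v ∈ edgeBA y g, p v = 1) ↔
      ∀ b y, ∑ a, p (a, b, 0, y) = ∑ a, p (a, b, 1, y) := by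
  refine (forall_congr' fun y => ?_).trans forall_comm
  simp only [sum_edgeBA, Finset.sum_comm (γ := Fin 2) (f := fun a b => p (a, b, _, y))]
  rw [forall_sum_comp_eq_iff (q := fun b x => ∑ a, p (a, b, x, y))
    fun x => Finset.sum_comm.trans (hp x y)]
  exact forall_congr' fun b => Fin.forall_two_eq_iff

/-- for a probabilistic model `p` on the EPR scenario, the ND condition
holds iff every Foulis–Randall edge sums to 1, and equivalently iff the sums over all
Foulis–Randall edges are all equal. -/
theorem nd_iff_fr_edges_sum_one (p : EPRVertex → ℝ) (hp : IsProbModel p) :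
    (IsND p ↔ ∀ e ∈ FREdges, ∑ v ∈ e, p v = 1) ∧
    (IsND p ↔ ∀ e ∈ FREdges, ∀ e' ∈ FREdges, ∑ v ∈ e, p v = ∑ v ∈ e', p v) := by
  have hsum_one : IsND p ↔ ∀ e ∈ FREdges, ∑ v ∈ e, p v = 1 := by
    rw [forall_mem_FREdges, IsND, forall_edgeAB_sum_eq_one_iff hp.2,
      forall_edgeBA_sum_eq_one_iff hp.2]
    simp only [sum_cartEdge, hp.2, forall_const, true_and]
  refine ⟨hsum_one, hsum_one.trans
    ⟨fun h e he e' he' => by rw [h e he, h e' he'], fun h e he => ?_⟩⟩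
  rw [h e he _ (cartEdge_mem_FREdges 0 0), sum_cartEdge, hp.2]
end

section
/- Let c be a deterministic model on the EPR scenario. The following are equivalent: (i) c satisfies the no-disturbance (ND) condition; (ii) |c ∩ e| = 1 for every Foulis–Randall edge e; (iii) the disturbance D(c) = Σ_e ||c ∩ e| − 1| (summed over all Foulis–Randall edges e) equals 0. -/
/-!
A deterministic model is a response function `r : (x, y) ↦ (a, b)`, and ND says exactly that
A's outcome `(r x y).1` does not depend on `y` and B's outcome `(r x y).2` does not depend
on `x`. The model meets the protocol edge `E^{AB}_{x,f}` once for every `y` with `f (r x y).1 = y`: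
if `(r x ·).1` is constant this is the single `y = f a`, and if it takes two values, the protocol
`f` that sends each of them back to its own setting gives two such `y`. Symmetrically for
`E^{BA}`, and `D(c) = 0` says precisely that every edge is met once.
-/

lemma forall_card_filter_comp_eq_self_eq_one_iff {X Y : Type*} [Fintype Y] [Nonempty Y]
    [DecidableEq X] [DecidableEq Y] (u : Y → X) :
    (∀ f : X → Y, (Finset.univ.filter fun y => f (u y) = y).card = 1) ↔
      ∀ y₁ y₂, u y₁ = u y₂ := by
  constructor
  · intro h y₁ y₂
    by_contra hne
    have hy : y₁ ≠ y₂ := fun h' => hne (h' ▸ rfl)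
    let f : X → Y := fun x => if x = u y₁ then y₁ else y₂
    have hsub : {y₁, y₂} ⊆ Finset.univ.filter fun y => f (u y) = y := by
      intro y hy'
      rcases Finset.mem_insert.mp hy' with rfl | hy'
      · simp [f]
      · rw [Finset.mem_singleton.mp hy']
        simp [f, Ne.symm hne]
    have := Finset.card_le_card hsub
    rw [h f, Finset.card_pair hy] at this
    omega
  · intro h f
    obtain ⟨y₀⟩ := ‹Nonempty Y›
    rw [Finset.card_eq_one]
    exact ⟨f (u y₀), by ext y; simp [h y y₀, eq_comm]⟩

lemma Fin.forall_apply_eq_apply_iff_two {α : Type*} (u : Fin 2 → α) :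
    (∀ i j, u i = u j) ↔ u 0 = u 1 := by
  simp [Fin.forall_fin_two, eq_comm]

lemma forall_ite_eq_ite_iff {α M : Type*} [DecidableEq α] [Zero M] [One M] [NeZero (1 : M)]
    (s t : α) : (∀ a, (if a = s then (1 : M) else 0) = if a = t then 1 else 0) ↔ s = t := by
  refine ⟨fun h => ?_, fun h _ => h ▸ rfl⟩
  simpa using h s

lemma disturbance_eq_zero_iff (c : Finset EPRVertex) :
    disturbance c = 0 ↔ ∀ e ∈ FREdges, (c ∩ e).card = 1 := by
  simp only [disturbance, Finset.sum_eq_zero_iff, Int.natAbs_eq_zero, sub_eq_zero]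
  exact_mod_cast Iff.rfl

lemma forall_mem_FREdges_iff {P : Finset EPRVertex → Prop} :
    (∀ e ∈ FREdges, P e) ↔
      (∀ x y, P (cartEdge x y)) ∧ (∀ x f, P (edgeAB x f)) ∧ (∀ y g, P (edgeBA y g)) := by
  simp only [FREdges, Finset.mem_union, Finset.mem_image, Finset.mem_univ, true_and]
  constructor
  · intro h
    exact ⟨fun x y => h _ (.inl (.inl ⟨(x, y), rfl⟩)), fun x f => h _ (.inl (.inr ⟨(x, f), rfl⟩)),
      fun y g => h _ (.inr ⟨(y, g), rfl⟩)⟩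
  · rintro ⟨hcart, hAB, hBA⟩ e ((⟨xy, rfl⟩ | ⟨xf, rfl⟩) | ⟨yg, rfl⟩)
    exacts [hcart _ _, hAB _ _, hBA _ _]

lemma IsDetModel.exists_response {c : Finset EPRVertex} (hc : IsDetModel c) :
    ∃ r : Fin 2 → Fin 2 → Fin 2 × Fin 2, ∀ a b x y, (a, b, x, y) ∈ c ↔ (a, b) = r x y := by
  choose v hv using fun x y => Finset.card_eq_one.mp (hc x y)
  refine ⟨fun x y => ((v x y).1, (v x y).2.1), fun a b x y => ?_⟩
  have hxy : (v x y).2.2 = (x, y) := by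
    have := (Finset.mem_inter.mp (hv x y ▸ Finset.mem_singleton_self _)).2
    simp only [cartEdge, Finset.mem_filter] at this
    exact Prod.ext this.2.1 this.2.2
  have := Finset.ext_iff.mp (hv x y) (a, b, x, y)
  simp only [Finset.mem_inter, cartEdge, Finset.mem_filter, Finset.mem_univ, and_self,
    and_true, Finset.mem_singleton] at this
  rw [this, show v x y = ((v x y).1, (v x y).2.1, x, y) from Prod.ext rfl (Prod.ext rfl hxy)]
  simp

section response

variable {c : Finset EPRVertex} {r : Fin 2 → Fin 2 → Fin 2 × Fin 2}
  (hr : ∀ a b x y, (a, b, x, y) ∈ c ↔ (a, b) = r x y)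
include hr

lemma sum_indicator_fst (a x y : Fin 2) :
    ∑ b : Fin 2, indicator c (a, b, x, y) = if a = (r x y).1 then 1 else 0 := by
  simp [indicator, hr, Prod.ext_iff, ite_and]

lemma sum_indicator_snd (b x y : Fin 2) :
    ∑ a : Fin 2, indicator c (a, b, x, y) = if b = (r x y).2 then 1 else 0 := by
  simp [indicator, hr, Prod.ext_iff, ite_and]

lemma isND_indicator_iff :
    IsND (indicator c) ↔ (∀ x, (r x 0).1 = (r x 1).1) ∧ ∀ y, (r 0 y).2 = (r 1 y).2 := by
  simp only [IsND, sum_indicator_fst hr, sum_indicator_snd hr]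
  exact and_congr (forall_comm.trans (forall_congr' fun x => forall_ite_eq_ite_iff _ _))
    (forall_comm.trans (forall_congr' fun y => forall_ite_eq_ite_iff _ _))

lemma card_inter_edgeAB (x : Fin 2) (f : Fin 2 → Fin 2) :
    (c ∩ edgeAB x f).card = (Finset.univ.filter fun y => f (r x y).1 = y).card := by
  refine Finset.card_nbij' (fun v => v.2.2.2) (fun y => ((r x y).1, (r x y).2, x, y))
    ?_ (fun y hy => ?_) ?_ fun _ _ => rfl
  on_goal 2 =>
    refine Finset.mem_coe.mpr (Finset.mem_inter.mpr ⟨(hr _ _ _ _).mpr rfl, ?_⟩)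
    simpa [edgeAB] using (Finset.mem_filter.mp hy).2.symm
  all_goals
    rintro ⟨a, b, x', y'⟩ hv
    simp only [Finset.coe_inter, Set.mem_inter_iff, Finset.mem_coe, hr, edgeAB, Finset.mem_filter,
      Finset.mem_univ, true_and] at hv
    obtain ⟨hv, rfl, rfl⟩ := hv
    simp [← hv]

lemma card_inter_edgeBA (y : Fin 2) (g : Fin 2 → Fin 2) :
    (c ∩ edgeBA y g).card = (Finset.univ.filter fun x => g (r x y).2 = x).card := by
  refine Finset.card_nbij' (fun v => v.2.2.1) (fun x => ((r x y).1, (r x y).2, x, y))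
    ?_ (fun x hx => ?_) ?_ fun _ _ => rfl
  on_goal 2 =>
    refine Finset.mem_coe.mpr (Finset.mem_inter.mpr ⟨(hr _ _ _ _).mpr rfl, ?_⟩)
    simpa [edgeBA] using (Finset.mem_filter.mp hx).2.symm
  all_goals
    rintro ⟨a, b, x', y'⟩ hv
    simp only [Finset.coe_inter, Set.mem_inter_iff, Finset.mem_coe, hr, edgeBA, Finset.mem_filter,
      Finset.mem_univ, true_and] at hv
    obtain ⟨hv, rfl, rfl⟩ := hv
    simp [← hv]

end response

/-- for a deterministic model `c`, ND holds iff every Foulis–Randall edge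
meets `c` in exactly one vertex, iff the disturbance `D(c)` is zero. -/
theorem detModel_nd_iff_fr_card_one_iff_disturbance_zero
    (c : Finset EPRVertex) (hc : IsDetModel c) :
    (IsND (indicator c) ↔ ∀ e ∈ FREdges, (c ∩ e).card = 1) ∧
    (IsND (indicator c) ↔ disturbance c = 0) := by
  obtain ⟨r, hr⟩ := hc.exists_response
  have hFR : IsND (indicator c) ↔ ∀ e ∈ FREdges, (c ∩ e).card = 1 := by
    rw [isND_indicator_iff hr, forall_mem_FREdges_iff]
    simp only [card_inter_edgeAB hr, card_inter_edgeBA hr,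
      forall_card_filter_comp_eq_self_eq_one_iff, Fin.forall_apply_eq_apply_iff_two]
    exact (and_iff_right hc).symm
  exact ⟨hFR, hFR.trans (disturbance_eq_zero_iff c).symm⟩
end

section
/- Consider the non-orthogonality graph of the Foulis–Randall product of the EPR scenario: the simple graph on V = Fin 2 × Fin 2 × Fin 2 × Fin 2 in which distinct u, v are adjacent exactly when no Foulis–Randall edge contains both. Its maximal cliques are exactly the 16 local deterministic models {(ε x, δ y, x, y) : x, y ∈ Fin 2} for functions ε, δ : Fin 2 → Fin 2; in particular, every maximal clique has exactly 4 vertices and there are exactly 16 maximal cliques. -/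
/-- The non-orthogonality graph of a family of edges on the EPR vertices: distinct
`u, v` are adjacent exactly when no edge of the family contains both. -/
def NOGraph (E : Finset (Finset EPRVertex)) : SimpleGraph EPRVertex where
  Adj u v := u ≠ v ∧ ∀ e ∈ E, ¬(u ∈ e ∧ v ∈ e)
  symm := by
    constructor
    intro u v ⟨hne, h⟩
    exact ⟨hne.symm, fun e he hv => h e he ⟨hv.2, hv.1⟩⟩
  loopless := by
    constructor
    intro u ⟨hne, _⟩
    exact hne rfl

/-- A maximal clique: a clique which is not properly contained in any other clique. -/
def IsMaxClique (G : SimpleGraph EPRVertex) (s : Set EPRVertex) : Prop :=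
  G.IsClique s ∧ ∀ t : Set EPRVertex, G.IsClique t → s ⊆ t → s = t

/-- The local deterministic model determined by response functions `ε, δ`. -/
def localDet (ε δ : Fin 2 → Fin 2) : Finset EPRVertex :=
  Finset.univ.image fun xy : Fin 2 × Fin 2 => (ε xy.1, δ xy.2, xy.1, xy.2)

section LocalGraph

variable {A B X Y : Type*}

def localGraph (A B X Y : Type*) : SimpleGraph (A × B × X × Y) where
  Adj u v := (u.2.2.1, u.2.2.2) ≠ (v.2.2.1, v.2.2.2) ∧
    (u.2.2.1 = v.2.2.1 → u.1 = v.1) ∧ (u.2.2.2 = v.2.2.2 → u.2.1 = v.2.1)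
  symm := ⟨fun _ _ h =>
    ⟨h.1.symm, fun hx => (h.2.1 hx.symm).symm, fun hy => (h.2.2 hy.symm).symm⟩⟩
  loopless := ⟨fun _ h => h.1 rfl⟩

@[simp]
theorem localGraph_adj {u v : A × B × X × Y} :
    (localGraph A B X Y).Adj u v ↔ (u.2.2.1, u.2.2.2) ≠ (v.2.2.1, v.2.2.2) ∧
      (u.2.2.1 = v.2.2.1 → u.1 = v.1) ∧ (u.2.2.2 = v.2.2.2 → u.2.1 = v.2.1) :=
  Iff.rfl

def localResponse (ε : X → A) (δ : Y → B) (xy : X × Y) : A × B × X × Y :=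
  (ε xy.1, δ xy.2, xy.1, xy.2)

theorem localResponse_injective (ε : X → A) (δ : Y → B) :
    Function.Injective (localResponse ε δ) :=
  fun _ _ h => Prod.ext (congrArg (·.2.2.1) h) (congrArg (·.2.2.2) h)

theorem injective2_range_localResponse [Nonempty X] [Nonempty Y] :
    Function.Injective2 fun (ε : X → A) (δ : Y → B) => Set.range (localResponse ε δ) := by
  intro ε ε' δ δ' h
  dsimp only at h
  have key : ∀ x y, ε x = ε' x ∧ δ y = δ' y := by
    intro x y
    obtain ⟨xy, hxy⟩ : localResponse ε δ (x, y) ∈ Set.range (localResponse ε' δ') := by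
      rw [← h]; exact Set.mem_range_self _
    simp only [localResponse, Prod.mk.injEq] at hxy
    obtain ⟨ha, hb, rfl, rfl⟩ := hxy
    exact ⟨ha.symm, hb.symm⟩
  inhabit X; inhabit Y
  exact ⟨funext fun x => (key x default).1, funext fun y => (key default y).2⟩

theorem isClique_range_localResponse (ε : X → A) (δ : Y → B) :
    (localGraph A B X Y).IsClique (Set.range (localResponse ε δ)) := by
  rintro _ ⟨xy, rfl⟩ _ ⟨xy', rfl⟩ hne
  exact ⟨fun h => hne (congrArg _ h), congrArg ε, congrArg δ⟩

theorem maximal_isClique_range_localResponse (ε : X → A) (δ : Y → B) :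
    Maximal (localGraph A B X Y).IsClique (Set.range (localResponse ε δ)) := by
  refine ⟨isClique_range_localResponse ε δ, fun t ht hsub w hw => ?_⟩
  have hr : localResponse ε δ (w.2.2.1, w.2.2.2) ∈ t := hsub (Set.mem_range_self _)
  by_contra hwr
  have hne : w ≠ localResponse ε δ (w.2.2.1, w.2.2.2) := by
    intro h
    exact hwr ⟨_, h.symm⟩
  exact (localGraph_adj.mp (ht hw hr hne)).1 rfl

theorem fst_eq_of_isClique_localGraph {s : Set (A × B × X × Y)}
    (hs : (localGraph A B X Y).IsClique s) {u v : A × B × X × Y} (hu : u ∈ s) (hv : v ∈ s)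
    (hx : u.2.2.1 = v.2.2.1) : u.1 = v.1 := by
  obtain rfl | huv := eq_or_ne u v
  · rfl
  · exact (localGraph_adj.mp (hs hu hv huv)).2.1 hx

theorem snd_fst_eq_of_isClique_localGraph {s : Set (A × B × X × Y)}
    (hs : (localGraph A B X Y).IsClique s) {u v : A × B × X × Y} (hu : u ∈ s) (hv : v ∈ s)
    (hy : u.2.2.2 = v.2.2.2) : u.2.1 = v.2.1 := by
  obtain rfl | huv := eq_or_ne u v
  · rfl
  · exact (localGraph_adj.mp (hs hu hv huv)).2.2 hy

theorem exists_subset_range_localResponse [Nonempty A] [Nonempty B] {s : Set (A × B × X × Y)}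
    (hs : (localGraph A B X Y).IsClique s) :
    ∃ (ε : X → A) (δ : Y → B), s ⊆ Set.range (localResponse ε δ) := by
  -- `ε x` is the outcome of A that `s` records at setting `x`, arbitrary if `s` has none there.
  let ε x := Classical.epsilon fun a => ∃ u ∈ s, u.2.2.1 = x ∧ u.1 = a
  let δ y := Classical.epsilon fun b => ∃ u ∈ s, u.2.2.2 = y ∧ u.2.1 = b
  refine ⟨ε, δ, fun u hu => ⟨(u.2.2.1, u.2.2.2), ?_⟩⟩
  obtain ⟨v, hv, hvx, hva⟩ : ∃ v ∈ s, v.2.2.1 = u.2.2.1 ∧ v.1 = ε u.2.2.1 :=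
    Classical.epsilon_spec (p := fun a => ∃ v ∈ s, v.2.2.1 = u.2.2.1 ∧ v.1 = a)
      ⟨u.1, u, hu, rfl, rfl⟩
  obtain ⟨w, hw, hwy, hwb⟩ : ∃ w ∈ s, w.2.2.2 = u.2.2.2 ∧ w.2.1 = δ u.2.2.2 :=
    Classical.epsilon_spec (p := fun b => ∃ w ∈ s, w.2.2.2 = u.2.2.2 ∧ w.2.1 = b)
      ⟨u.2.1, u, hu, rfl, rfl⟩
  rw [localResponse, ← hva, ← hwb, fst_eq_of_isClique_localGraph hs hv hu hvx,
    snd_fst_eq_of_isClique_localGraph hs hw hu hwy]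

theorem maximal_isClique_localGraph_iff [Nonempty A] [Nonempty B] {s : Set (A × B × X × Y)} :
    Maximal (localGraph A B X Y).IsClique s ↔
      ∃ (ε : X → A) (δ : Y → B), s = Set.range (localResponse ε δ) := by
  refine ⟨fun hs => ?_, ?_⟩
  · obtain ⟨ε, δ, hsub⟩ := exists_subset_range_localResponse hs.prop
    exact ⟨ε, δ, hs.eq_of_subset (isClique_range_localResponse ε δ) hsub⟩
  · rintro ⟨ε, δ, rfl⟩
    exact maximal_isClique_range_localResponse ε δ

end LocalGraph

theorem exists_edgeAB_mem_iff (u v : EPRVertex) :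
    (∃ x f, u ∈ edgeAB x f ∧ v ∈ edgeAB x f) ↔
      u.2.2.1 = v.2.2.1 ∧ (u.1 = v.1 → u.2.2.2 = v.2.2.2) := by
  simp only [edgeAB, Finset.mem_filter, Finset.mem_univ, true_and]
  constructor
  · rintro ⟨x, f, ⟨rfl, hu⟩, hvx, hv⟩
    exact ⟨hvx.symm, fun ha => by rw [hu, hv, ha]⟩
  · rintro ⟨hx, hy⟩
    refine ⟨u.2.2.1, fun a => if a = u.1 then u.2.2.2 else v.2.2.2, ⟨rfl, by simp⟩,
      hx.symm, ?_⟩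
    dsimp only
    split_ifs with ha
    · exact (hy ha.symm).symm
    · rfl

theorem exists_edgeBA_mem_iff (u v : EPRVertex) :
    (∃ y g, u ∈ edgeBA y g ∧ v ∈ edgeBA y g) ↔
      u.2.2.2 = v.2.2.2 ∧ (u.2.1 = v.2.1 → u.2.2.1 = v.2.2.1) := by
  simp only [edgeBA, Finset.mem_filter, Finset.mem_univ, true_and]
  constructor
  · rintro ⟨y, g, ⟨rfl, hu⟩, hvy, hv⟩
    exact ⟨hvy.symm, fun hb => by rw [hu, hv, hb]⟩
  · rintro ⟨hy, hx⟩
    refine ⟨u.2.2.2, fun b => if b = u.2.1 then u.2.2.1 else v.2.2.1, ⟨rfl, by simp⟩,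
      hy.symm, ?_⟩
    dsimp only
    split_ifs with hb
    · exact (hx hb.symm).symm
    · rfl

theorem exists_cartEdge_mem_iff (u v : EPRVertex) :
    (∃ x y, u ∈ cartEdge x y ∧ v ∈ cartEdge x y) ↔
      u.2.2.1 = v.2.2.1 ∧ u.2.2.2 = v.2.2.2 := by
  simp only [cartEdge, Finset.mem_filter, Finset.mem_univ, true_and]
  constructor
  · rintro ⟨x, y, ⟨rfl, rfl⟩, hx, hy⟩
    exact ⟨hx.symm, hy.symm⟩
  · rintro ⟨hx, hy⟩
    exact ⟨_, _, ⟨rfl, rfl⟩, hx.symm, hy.symm⟩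

theorem exists_mem_FREdges_iff (u v : EPRVertex) :
    (∃ e ∈ FREdges, u ∈ e ∧ v ∈ e) ↔
      (u.2.2.1 = v.2.2.1 ∧ (u.1 = v.1 → u.2.2.2 = v.2.2.2)) ∨
        (u.2.2.2 = v.2.2.2 ∧ (u.2.1 = v.2.1 → u.2.2.1 = v.2.2.1)) := by
  simp only [FREdges, Finset.mem_union, Finset.mem_image, Finset.mem_univ, true_and, or_and_right,
    exists_or, Prod.exists, exists_exists_exists_and_eq]
  rw [exists_cartEdge_mem_iff, exists_edgeAB_mem_iff, exists_edgeBA_mem_iff]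
  tauto

theorem noGraph_adj (E : Finset (Finset EPRVertex)) {u v : EPRVertex} :
    (NOGraph E).Adj u v ↔ u ≠ v ∧ ¬∃ e ∈ E, u ∈ e ∧ v ∈ e := by
  simp [NOGraph]

theorem noGraph_FREdges_eq_localGraph :
    NOGraph FREdges = localGraph (Fin 2) (Fin 2) (Fin 2) (Fin 2) := by
  ext ⟨a, b, x, y⟩ ⟨a', b', x', y'⟩
  rw [noGraph_adj, exists_mem_FREdges_iff, localGraph_adj]
  simp only [ne_eq, Prod.mk.injEq]
  tauto

theorem isMaxClique_iff_maximal (G : SimpleGraph EPRVertex) (s : Set EPRVertex) :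
    IsMaxClique G s ↔ Maximal G.IsClique s :=
  maximal_subset_iff.symm

theorem coe_localDet (ε δ : Fin 2 → Fin 2) :
    (localDet ε δ : Set EPRVertex) = Set.range (localResponse ε δ) := by
  rw [localDet, Finset.coe_image, Finset.coe_univ, Set.image_univ]
  rfl

theorem injective2_localDet : Function.Injective2 localDet := by
  intro ε ε' δ δ' h
  rw [← Finset.coe_inj, coe_localDet, coe_localDet] at h
  exact injective2_range_localResponse h

theorem card_localDet (ε δ : Fin 2 → Fin 2) : (localDet ε δ).card = 4 :=
  (Finset.card_image_of_injective _ (localResponse_injective ε δ)).trans rfl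

/-- the maximal cliques of the non-orthogonality graph of the
Foulis–Randall product of the EPR scenario are exactly the 16 local deterministic
models `{(ε x, δ y, x, y) : x, y}`; each has exactly 4 vertices, and there are
exactly 16 of them. -/
theorem maxCliques_of_NO_FR_eq_localDet :
    (∀ s : Finset EPRVertex,
      IsMaxClique (NOGraph FREdges) (s : Set EPRVertex) ↔
        ∃ ε δ : Fin 2 → Fin 2, s = localDet ε δ) ∧
    (∀ s : Finset EPRVertex,
      IsMaxClique (NOGraph FREdges) (s : Set EPRVertex) → s.card = 4) ∧
    Nat.card {s : Finset EPRVertex // IsMaxClique (NOGraph FREdges) (s : Set EPRVertex)}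
      = 16 := by
  have hmax (s : Finset EPRVertex) : IsMaxClique (NOGraph FREdges) (s : Set EPRVertex) ↔
      ∃ ε δ : Fin 2 → Fin 2, s = localDet ε δ := by
    simp only [isMaxClique_iff_maximal, noGraph_FREdges_eq_localGraph,
      maximal_isClique_localGraph_iff, ← coe_localDet, Finset.coe_inj]
  refine ⟨hmax, fun s hs => ?_, ?_⟩
  · obtain ⟨ε, δ, rfl⟩ := (hmax s).mp hs
    exact card_localDet ε δ
  · calc Nat.card {s : Finset EPRVertex // IsMaxClique (NOGraph FREdges) (s : Set EPRVertex)}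
        = Nat.card (Set.range (Function.uncurry localDet)) :=
          Nat.card_congr (Equiv.subtypeEquivRight fun s => by simp [hmax, eq_comm])
      _ = Nat.card ((Fin 2 → Fin 2) × (Fin 2 → Fin 2)) :=
          Nat.card_range_of_injective injective2_localDet.uncurry
      _ = 16 := by simp [Nat.card_eq_fintype_card]
end

section
/- Let c be a deterministic model on the EPR scenario. For every x ∈ Fin 2 and f : Fin 2 → Fin 2, |c ∩ E^{AB}_{x,f}| + |c ∩ E^{AB}_{x,f'}| = 2, where f'(a) = 1 − f(a), and similarly for B→A protocol edges. Consequently ||c ∩ e| − 1| ≤ 1 for every Foulis–Randall edge e, the disturbance D(c) is an even natural number, and D(c) ≥ 2 whenever c violates the no-disturbance condition. -/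
/-! Complementary protocol edges `E^{AB}_{x,f}` and `E^{AB}_{x,1-f}` partition `e_{x,0} ∪ e_{x,1}`,
each of which meets a deterministic model exactly once, so their counts add up to `2`. The
Cartesian edges are the constant protocol edges, so the disturbance splits into a sum over A→B
protocols and a sum over B→A protocols; in each, the terms of `f` and `1 - f` agree, making it
even. If Alice's marginal at outcome `a` and setting `x` depends on `y`, the protocol answering
`1` exactly on `a` meets `c` in a different number of vertices than `e_{x,0}`, so the disturbance
is nonzero, hence at least `2`. -/

open Finset

theorem Fin.eq_one_sub_iff_ne {y z : Fin 2} : y = 1 - z ↔ y ≠ z := by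
  revert y z; decide

theorem Fin.one_sub_ne_self (z : Fin 2) : 1 - z ≠ z :=
  Fin.eq_one_sub_iff_ne.mp rfl

theorem even_sum_of_involutive {α : Type*} [Fintype α] {σ : α → α}
    (hσ : Function.Involutive σ) (hfix : ∀ a, σ a ≠ a) {h : α → ℕ} (hh : ∀ a, h (σ a) = h a) :
    Even (∑ a, h a) := by
  rw [← ZMod.natCast_eq_zero_iff_even, Nat.cast_sum]
  refine sum_ninvolution σ (fun a => ?_) (fun a _ => hfix a) (fun _ => mem_univ _) hσ
  rw [hh, ← two_mul, show (2 : ZMod 2) = 0 from rfl, zero_mul]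

theorem cartEdge_eq_edgeAB (x y : Fin 2) : cartEdge x y = edgeAB x fun _ => y := rfl

theorem edgeAB_mem_FREdges (x : Fin 2) (f : Fin 2 → Fin 2) : edgeAB x f ∈ FREdges := by
  simp [FREdges]

theorem edgeBA_mem_FREdges (y : Fin 2) (g : Fin 2 → Fin 2) : edgeBA y g ∈ FREdges := by
  simp [FREdges]

theorem disjoint_cartEdge_of_ne_right {x x' y y' : Fin 2} (hy : y ≠ y') :
    Disjoint (cartEdge x y) (cartEdge x' y') := by
  simp only [cartEdge, disjoint_filter]
  rintro v - ⟨-, rfl⟩ ⟨-, rfl⟩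
  exact hy rfl

theorem disjoint_cartEdge_of_ne_left {x x' y y' : Fin 2} (hx : x ≠ x') :
    Disjoint (cartEdge x y) (cartEdge x' y') := by
  simp only [cartEdge, disjoint_filter]
  rintro v - ⟨rfl, -⟩ ⟨rfl, -⟩
  exact hx rfl

theorem disjoint_edgeAB_compl (x : Fin 2) (f : Fin 2 → Fin 2) :
    Disjoint (edgeAB x f) (edgeAB x fun a => 1 - f a) := by
  simp only [edgeAB, disjoint_filter]
  rintro v - ⟨-, hv⟩ ⟨-, hv'⟩
  exact Fin.one_sub_ne_self _ (hv'.symm.trans hv)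

theorem disjoint_edgeBA_compl (y : Fin 2) (g : Fin 2 → Fin 2) :
    Disjoint (edgeBA y g) (edgeBA y fun b => 1 - g b) := by
  simp only [edgeBA, disjoint_filter]
  rintro v - ⟨-, hv⟩ ⟨-, hv'⟩
  exact Fin.one_sub_ne_self _ (hv'.symm.trans hv)

theorem edgeAB_union_compl (x : Fin 2) (f : Fin 2 → Fin 2) :
    (edgeAB x f ∪ edgeAB x fun a => 1 - f a) = cartEdge x 0 ∪ cartEdge x 1 := by
  ext ⟨a, b, x', y⟩
  simp only [edgeAB, cartEdge, mem_union, mem_filter, mem_univ, true_and, Fin.eq_one_sub_iff_ne]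
  fin_cases y <;> tauto

theorem edgeBA_union_compl (y : Fin 2) (g : Fin 2 → Fin 2) :
    (edgeBA y g ∪ edgeBA y fun b => 1 - g b) = cartEdge 0 y ∪ cartEdge 1 y := by
  ext ⟨a, b, x, y'⟩
  simp only [edgeBA, cartEdge, mem_union, mem_filter, mem_univ, true_and, Fin.eq_one_sub_iff_ne]
  fin_cases x <;> tauto

theorem edgeAB_injective :
    Function.Injective fun p : Fin 2 × (Fin 2 → Fin 2) => edgeAB p.1 p.2 := by
  rintro ⟨x, f⟩ ⟨x', f'⟩ (h : edgeAB x f = edgeAB x' f')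
  have hmem : ∀ a, ((a, 0, x, f a) : EPRVertex) ∈ edgeAB x' f' := fun a =>
    h ▸ by simp [edgeAB]
  simp only [edgeAB, mem_filter, mem_univ, true_and] at hmem
  exact Prod.ext (hmem 0).1 (funext fun a => (hmem a).2)

theorem edgeBA_injective :
    Function.Injective fun p : Fin 2 × (Fin 2 → Fin 2) => edgeBA p.1 p.2 := by
  rintro ⟨y, g⟩ ⟨y', g'⟩ (h : edgeBA y g = edgeBA y' g')
  have hmem : ∀ b, ((0, b, g b, y) : EPRVertex) ∈ edgeBA y' g' := fun b =>
    h ▸ by simp [edgeBA]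
  simp only [edgeBA, mem_filter, mem_univ, true_and] at hmem
  exact Prod.ext (hmem 0).1 (funext fun b => (hmem b).2)

theorem edgeAB_eq_cartEdge_of_eq_edgeBA {x y : Fin 2} {f g : Fin 2 → Fin 2}
    (h : edgeAB x f = edgeBA y g) : edgeAB x f = cartEdge x y := by
  have hf : ∀ a, f a = y := fun a => by
    have hmem : ((a, 0, x, f a) : EPRVertex) ∈ edgeBA y g := h ▸ by simp [edgeAB]
    simp only [edgeBA, mem_filter, mem_univ, true_and] at hmem
    exact hmem.1
  rw [cartEdge_eq_edgeAB, funext hf]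

theorem card_inter_edgeAB_eq_sum (c : Finset EPRVertex) (x : Fin 2) (f : Fin 2 → Fin 2) :
    ((c ∩ edgeAB x f).card : ℝ) = ∑ a : Fin 2, ∑ b : Fin 2, indicator c (a, b, x, f a) := by
  rw [inter_comm, ← filter_mem_eq_inter, edgeAB, filter_filter, card_filter, Nat.cast_sum]
  simp [indicator, Fintype.sum_prod_type, ite_and]

theorem card_inter_edgeBA_eq_sum (c : Finset EPRVertex) (y : Fin 2) (g : Fin 2 → Fin 2) :
    ((c ∩ edgeBA y g).card : ℝ) = ∑ b : Fin 2, ∑ a : Fin 2, indicator c (a, b, g b, y) := by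
  rw [sum_comm, inter_comm, ← filter_mem_eq_inter, edgeBA, filter_filter, card_filter,
    Nat.cast_sum]
  simp [indicator, Fintype.sum_prod_type, ite_and]

theorem exists_card_inter_edgeAB_ne_one {c : Finset EPRVertex} {a x : Fin 2}
    (h : ∑ b : Fin 2, indicator c (a, b, x, 0) ≠ ∑ b : Fin 2, indicator c (a, b, x, 1)) :
    ∃ f, (c ∩ edgeAB x f).card ≠ 1 := by
  by_contra! hall
  -- `f` differs from the constant protocol `0` only on the row of outcome `a`
  set f : Fin 2 → Fin 2 := fun a' => if a' = a then 1 else 0 with hf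
  have hrow : ∑ a', (∑ b, indicator c (a', b, x, f a') - ∑ b, indicator c (a', b, x, 0)) =
      ∑ b, indicator c (a, b, x, 1) - ∑ b, indicator c (a, b, x, 0) :=
    (sum_eq_single a (fun a' _ ha' => by simp [hf, ha']) (by simp)).trans (by simp [hf])
  have h1 := card_inter_edgeAB_eq_sum c x f
  have h0 := card_inter_edgeAB_eq_sum c x fun _ => 0
  rw [hall] at h1 h0
  rw [sum_sub_distrib, ← h1, ← h0, sub_self] at hrow
  exact h (sub_eq_zero.mp hrow.symm).symm

theorem exists_card_inter_edgeBA_ne_one {c : Finset EPRVertex} {b y : Fin 2}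
    (h : ∑ a : Fin 2, indicator c (a, b, 0, y) ≠ ∑ a : Fin 2, indicator c (a, b, 1, y)) :
    ∃ g, (c ∩ edgeBA y g).card ≠ 1 := by
  by_contra! hall
  set g : Fin 2 → Fin 2 := fun b' => if b' = b then 1 else 0 with hg
  have hrow : ∑ b', (∑ a, indicator c (a, b', g b', y) - ∑ a, indicator c (a, b', 0, y)) =
      ∑ a, indicator c (a, b, 1, y) - ∑ a, indicator c (a, b, 0, y) :=
    (sum_eq_single b (fun b' _ hb' => by simp [hg, hb']) (by simp)).trans (by simp [hg])
  have h1 := card_inter_edgeBA_eq_sum c y g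
  have h0 := card_inter_edgeBA_eq_sum c y fun _ => 0
  rw [hall] at h1 h0
  rw [sum_sub_distrib, ← h1, ← h0, sub_self] at hrow
  exact h (sub_eq_zero.mp hrow.symm).symm

theorem exists_card_inter_ne_one_of_not_isND {c : Finset EPRVertex}
    (h : ¬ IsND (indicator c)) : ∃ e ∈ FREdges, (c ∩ e).card ≠ 1 := by
  simp only [IsND, not_and_or, not_forall] at h
  rcases h with ⟨a, x, hax⟩ | ⟨b, y, hby⟩
  · obtain ⟨f, hf⟩ := exists_card_inter_edgeAB_ne_one hax
    exact ⟨_, edgeAB_mem_FREdges x f, hf⟩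
  · obtain ⟨g, hg⟩ := exists_card_inter_edgeBA_ne_one hby
    exact ⟨_, edgeBA_mem_FREdges y g, hg⟩

def complProtocol (p : Fin 2 × (Fin 2 → Fin 2)) : Fin 2 × (Fin 2 → Fin 2) :=
  (p.1, fun a => 1 - p.2 a)

theorem complProtocol_involutive : Function.Involutive complProtocol := fun _ => by
  simp [complProtocol]

theorem complProtocol_ne_self (p : Fin 2 × (Fin 2 → Fin 2)) : complProtocol p ≠ p := fun h =>
  Fin.one_sub_ne_self (p.2 0) (congrFun (congrArg Prod.snd h) 0)

def edgeDisturbance (c e : Finset EPRVertex) : ℕ :=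
  (((c ∩ e).card : ℤ) - 1).natAbs

theorem disturbance_eq_sum_edgeDisturbance (c : Finset EPRVertex) :
    disturbance c = ∑ e ∈ FREdges, edgeDisturbance c e :=
  rfl

theorem disturbance_ne_zero {c e : Finset EPRVertex} (he : e ∈ FREdges)
    (hne : (c ∩ e).card ≠ 1) : disturbance c ≠ 0 := by
  rw [disturbance_eq_sum_edgeDisturbance, Ne, sum_eq_zero_iff]
  intro h
  have := h e he
  rw [edgeDisturbance] at this
  omega

namespace IsDetModel

variable {c : Finset EPRVertex} (hc : IsDetModel c)
include hc

theorem card_inter_edgeAB_add_compl (x : Fin 2) (f : Fin 2 → Fin 2) :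
    (c ∩ edgeAB x f).card + (c ∩ edgeAB x fun a => 1 - f a).card = 2 := by
  rw [← card_union_of_disjoint
      ((disjoint_edgeAB_compl x f).mono inter_subset_right inter_subset_right),
    ← inter_union_distrib_left, edgeAB_union_compl, inter_union_distrib_left,
    card_union_of_disjoint ((disjoint_cartEdge_of_ne_right zero_ne_one).mono inter_subset_right
      inter_subset_right), hc, hc]

theorem card_inter_edgeBA_add_compl (y : Fin 2) (g : Fin 2 → Fin 2) :
    (c ∩ edgeBA y g).card + (c ∩ edgeBA y fun b => 1 - g b).card = 2 := by
  rw [← card_union_of_disjoint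
      ((disjoint_edgeBA_compl y g).mono inter_subset_right inter_subset_right),
    ← inter_union_distrib_left, edgeBA_union_compl, inter_union_distrib_left,
    card_union_of_disjoint ((disjoint_cartEdge_of_ne_left zero_ne_one).mono inter_subset_right
      inter_subset_right), hc, hc]

theorem card_inter_le_two : ∀ e ∈ FREdges, (c ∩ e).card ≤ 2 := by
  intro e he
  simp only [FREdges, mem_union, mem_image, mem_univ, true_and] at he
  rcases he with (⟨⟨x, y⟩, rfl⟩ | ⟨⟨x, f⟩, rfl⟩) | ⟨⟨y, g⟩, rfl⟩
  · exact (hc x y).trans_le one_le_two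
  · exact (Nat.le_add_right _ _).trans_eq (hc.card_inter_edgeAB_add_compl x f)
  · exact (Nat.le_add_right _ _).trans_eq (hc.card_inter_edgeBA_add_compl y g)

theorem edgeDisturbance_edgeAB_compl (p : Fin 2 × (Fin 2 → Fin 2)) :
    edgeDisturbance c (edgeAB (complProtocol p).1 (complProtocol p).2) =
      edgeDisturbance c (edgeAB p.1 p.2) := by
  have := hc.card_inter_edgeAB_add_compl p.1 p.2
  simp only [edgeDisturbance, complProtocol]
  omega

theorem edgeDisturbance_edgeBA_compl (p : Fin 2 × (Fin 2 → Fin 2)) :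
    edgeDisturbance c (edgeBA (complProtocol p).1 (complProtocol p).2) =
      edgeDisturbance c (edgeBA p.1 p.2) := by
  have := hc.card_inter_edgeBA_add_compl p.1 p.2
  simp only [edgeDisturbance, complProtocol]
  omega

theorem disturbance_eq_sum_protocols :
    disturbance c = ∑ p : Fin 2 × (Fin 2 → Fin 2), edgeDisturbance c (edgeAB p.1 p.2) +
      ∑ p : Fin 2 × (Fin 2 → Fin 2), edgeDisturbance c (edgeBA p.1 p.2) := by
  have hcart : (univ.image fun xy : Fin 2 × Fin 2 => cartEdge xy.1 xy.2) ⊆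
      univ.image fun p : Fin 2 × (Fin 2 → Fin 2) => edgeAB p.1 p.2 := by
    rintro _ h
    obtain ⟨⟨x, y⟩, -, rfl⟩ := mem_image.mp h
    exact mem_image.mpr ⟨(x, fun _ => y), mem_univ _, rfl⟩
  have hboth : ∀ e ∈ (univ.image fun p : Fin 2 × (Fin 2 → Fin 2) => edgeAB p.1 p.2) ∩
      univ.image fun p : Fin 2 × (Fin 2 → Fin 2) => edgeBA p.1 p.2, edgeDisturbance c e = 0 := by
    intro e he
    obtain ⟨⟨⟨x, f⟩, -, rfl⟩, ⟨⟨y, g⟩, -, hfg⟩⟩ := And.imp mem_image.mp mem_image.mp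
      (mem_inter.mp he)
    rw [edgeDisturbance, edgeAB_eq_cartEdge_of_eq_edgeBA hfg.symm, hc]
    rfl
  rw [disturbance_eq_sum_edgeDisturbance, FREdges, union_eq_right.mpr hcart,
    ← add_zero (∑ e ∈ _ ∪ _, _), ← sum_eq_zero hboth, sum_union_inter,
    sum_image edgeAB_injective.injOn, sum_image edgeBA_injective.injOn]

theorem even_disturbance : Even (disturbance c) := by
  rw [hc.disturbance_eq_sum_protocols]
  exact (even_sum_of_involutive complProtocol_involutive complProtocol_ne_self
    hc.edgeDisturbance_edgeAB_compl).add
    (even_sum_of_involutive complProtocol_involutive complProtocol_ne_self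
      hc.edgeDisturbance_edgeBA_compl)

theorem two_le_disturbance_of_not_isND (h : ¬ IsND (indicator c)) : 2 ≤ disturbance c := by
  obtain ⟨e, he, hne⟩ := exists_card_inter_ne_one_of_not_isND h
  obtain ⟨k, hk⟩ := hc.even_disturbance
  have := disturbance_ne_zero he hne
  omega

end IsDetModel

/-- for a deterministic model `c`, complementary protocol edges together
meet `c` in exactly two vertices; hence `||c ∩ e| − 1| ≤ 1` on every FR edge, the
disturbance is even, and `D(c) ≥ 2` whenever `c` violates the ND condition. -/
theorem detModel_protocol_edge_pair_card
    (c : Finset EPRVertex) (hc : IsDetModel c) :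
    (∀ (x : Fin 2) (f : Fin 2 → Fin 2),
      (c ∩ edgeAB x f).card + (c ∩ edgeAB x fun a => 1 - f a).card = 2) ∧
    (∀ (y : Fin 2) (g : Fin 2 → Fin 2),
      (c ∩ edgeBA y g).card + (c ∩ edgeBA y fun b => 1 - g b).card = 2) ∧
    (∀ e ∈ FREdges, |((c ∩ e).card : ℤ) - 1| ≤ 1) ∧
    Even (disturbance c) ∧
    (¬ IsND (indicator c) → 2 ≤ disturbance c) := by
  refine ⟨hc.card_inter_edgeAB_add_compl, hc.card_inter_edgeBA_add_compl, fun e he => ?_,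
    hc.even_disturbance, hc.two_le_disturbance_of_not_isND⟩
  have := hc.card_inter_le_two e he
  rw [abs_sub_le_iff]
  omega
end

section
/- For all ε, δ : Fin 2 → ℤ with values in {−1, 1}, |ε(0)δ(0) + ε(0)δ(1) + ε(1)δ(0) − ε(1)δ(1)| ≤ 2; consequently, every deterministic model on the EPR scenario that satisfies the no-disturbance condition has Bell parameter B(1_c) ≤ 2, and every probabilistic model p that is a convex combination p = Σ_c q_c · 1_c of indicators of ND-satisfying deterministic models (q_c ≥ 0, Σ_c q_c = 1) satisfies B(p) ≤ 2. -/
/-!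
Under no disturbance a deterministic model assigns each party an outcome that depends only on
its own setting, so its correlations factor as `ε x * δ y` with `ε, δ = ±1`. Each of the four
Bell expressions is then, up to relabelling the settings, a CHSH expression
`ε₀ (δ₀ + δ₁) + ε₁ (δ₀ - δ₁)`, bounded by `|δ₀ + δ₁| + |δ₀ - δ₁| = 2`. The Bell parameter is a
maximum of absolute values of linear functionals, hence convex, and Jensen's inequality carries
the bound over to convex combinations of such models.
-/

section CHSH

variable {R : Type*} [CommRing R] [LinearOrder R] [IsStrictOrderedRing R]

lemma abs_add_add_abs_sub_le_two {a b : R} (ha : |a| ≤ 1) (hb : |b| ≤ 1) :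
    |a + b| + |a - b| ≤ 2 := by
  rw [abs_le] at ha hb
  rcases abs_cases (a + b) with ⟨h, _⟩ | ⟨h, _⟩ <;>
    rcases abs_cases (a - b) with ⟨h', _⟩ | ⟨h', _⟩ <;> linarith

lemma abs_chsh_le_two {a b c d : R} (ha : |a| ≤ 1) (hb : |b| ≤ 1) (hc : |c| ≤ 1)
    (hd : |d| ≤ 1) : |a * (c + d) + b * (c - d)| ≤ 2 :=
  calc |a * (c + d) + b * (c - d)| ≤ |a| * |c + d| + |b| * |c - d| := by
        rw [← abs_mul, ← abs_mul]; exact abs_add_le _ _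
    _ ≤ 1 * |c + d| + 1 * |c - d| := by gcongr
    _ ≤ 2 := by simpa using abs_add_add_abs_sub_le_two hc hd

lemma abs_sum_mul_sub_two_mul_le_two {e d : Fin 2 → R} (he : ∀ i, |e i| ≤ 1)
    (hd : ∀ j, |d j| ≤ 1) (x y : Fin 2) :
    |(∑ x' : Fin 2, ∑ y' : Fin 2, e x' * d y') - 2 * (e x * d y)| ≤ 2 := by
  fin_cases x <;> fin_cases y <;> simp only [Fin.sum_univ_two]
  · convert abs_chsh_le_two (he 1) (he 0) (hd 1) (hd 0) using 2; simp; ring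
  · convert abs_chsh_le_two (he 1) (he 0) (hd 0) (hd 1) using 2; simp; ring
  · convert abs_chsh_le_two (he 0) (he 1) (hd 1) (hd 0) using 2; simp; ring
  · convert abs_chsh_le_two (he 0) (he 1) (hd 0) (hd 1) using 2; simp; ring

end CHSH

def bellForm (x y : Fin 2) : (EPRVertex → ℝ) →ₗ[ℝ] ℝ where
  toFun p := (∑ x' : Fin 2, ∑ y' : Fin 2, corr x' y' p) - 2 * corr x y p
  map_add' p p' := by simp only [corr, Fin.sum_univ_two, Pi.add_apply]; ring
  map_smul' r p := by simp only [corr, Fin.sum_univ_two, Pi.smul_apply, smul_eq_mul,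
    RingHom.id_apply]; ring

lemma Bell_le_iff {p : EPRVertex → ℝ} {M : ℝ} : Bell p ≤ M ↔ ∀ x y, |bellForm x y p| ≤ M := by
  simp [Bell, bellForm, Finset.sup'_le_iff]

theorem convexOn_Bell : ConvexOn ℝ Set.univ Bell := by
  refine ⟨convex_univ, fun p _ p' _ a b ha hb _ => Bell_le_iff.2 fun x y => ?_⟩
  calc |bellForm x y (a • p + b • p')| = |a * bellForm x y p + b * bellForm x y p'| := by
        rw [map_add, map_smul, map_smul, smul_eq_mul, smul_eq_mul]
    _ ≤ a * |bellForm x y p| + b * |bellForm x y p'| := by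
        simpa only [abs_mul, abs_of_nonneg ha, abs_of_nonneg hb] using
          abs_add_le (a * bellForm x y p) (b * bellForm x y p')
    _ ≤ a * Bell p + b * Bell p' := by
        gcongr <;> exact Bell_le_iff.1 le_rfl x y

section DeterministicModel

variable {c : Finset EPRVertex}

lemma IsDetModel.exists_outcome (hc : IsDetModel c) :
    ∃ ω : Fin 2 → Fin 2 → Fin 2 × Fin 2, ∀ a b x y, (a, b, x, y) ∈ c ↔ (a, b) = ω x y := by
  choose v hv using fun x y => Finset.card_eq_one.mp (hc x y)
  refine ⟨fun x y => ((v x y).1, (v x y).2.1), fun a b x y => ?_⟩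
  have hvxy : (v x y).2.2 = (x, y) := by
    have := (Finset.mem_inter.mp ((hv x y).symm ▸ Finset.mem_singleton_self _)).2
    simpa [cartEdge, Prod.ext_iff] using this
  have hedge : (a, b, x, y) ∈ cartEdge x y := by simp [cartEdge]
  calc (a, b, x, y) ∈ c ↔ (a, b, x, y) ∈ c ∩ cartEdge x y := by simp [hedge]
    _ ↔ (a, b, x, y) = v x y := by rw [hv]; exact Finset.mem_singleton
    _ ↔ (a, b) = ((v x y).1, (v x y).2.1) := by
        generalize v x y = w at hvxy
        obtain ⟨a', b', x', y'⟩ := w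
        simp_all [Prod.ext_iff]

lemma sum_indicator_eq_ite_of_mem_iff {ω : Fin 2 → Fin 2 → Fin 2 × Fin 2}
    (hω : ∀ a b x y, (a, b, x, y) ∈ c ↔ (a, b) = ω x y) (a x y : Fin 2) :
    (∑ b : Fin 2, indicator c (a, b, x, y) = if a = (ω x y).1 then 1 else 0) ∧
    (∑ a' : Fin 2, indicator c (a', a, x, y) = if a = (ω x y).2 then 1 else 0) := by
  simp [indicator, hω, Prod.ext_iff, ite_and, Finset.sum_ite_eq']

lemma IsDetModel.exists_local_outcomes (hc : IsDetModel c) (hnd : IsND (indicator c)) :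
    ∃ α β : Fin 2 → Fin 2, ∀ a b x y, (a, b, x, y) ∈ c ↔ a = α x ∧ b = β y := by
  obtain ⟨ω, hω⟩ := hc.exists_outcome
  have hA : ∀ x y, (ω x y).1 = (ω x 0).1 := by
    intro x y
    have h := hnd.1 (ω x 0).1 x
    simp only [(sum_indicator_eq_ite_of_mem_iff hω _ _ _).1] at h
    fin_cases y
    · rfl
    · simpa [eq_comm] using h
  have hB : ∀ x y, (ω x y).2 = (ω 0 y).2 := by
    intro x y
    have h := hnd.2 (ω 0 y).2 y
    simp only [(sum_indicator_eq_ite_of_mem_iff hω _ _ _).2] at h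
    fin_cases x
    · rfl
    · simpa [eq_comm] using h
  refine ⟨fun x => (ω x 0).1, fun y => (ω 0 y).2, fun a b x y => ?_⟩
  rw [hω, Prod.ext_iff, hA, hB]

lemma corr_indicator_of_mem_iff {x y α β : Fin 2}
    (hc : ∀ a b, (a, b, x, y) ∈ c ↔ a = α ∧ b = β) :
    corr x y (indicator c) = (-1) ^ (α : ℕ) * (-1) ^ (β : ℕ) := by
  simp [corr, indicator, hc, ite_and, Finset.sum_ite_eq', pow_add]

lemma Bell_indicator_le_two (hc : IsDetModel c)
    (hnd : IsND (indicator c)) : Bell (indicator c) ≤ 2 := by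
  obtain ⟨α, β, hαβ⟩ := hc.exists_local_outcomes hnd
  have hcorr : ∀ x y, corr x y (indicator c) = (-1) ^ (α x : ℕ) * (-1) ^ (β y : ℕ) :=
    fun x y => corr_indicator_of_mem_iff (hαβ · · x y)
  simp only [Bell_le_iff, bellForm, LinearMap.coe_mk, AddHom.coe_mk, hcorr]
  exact abs_sum_mul_sub_two_mul_le_two (by simp) (by simp)

end DeterministicModel

/-- the deterministic CHSH bound `|ε₀δ₀ + ε₀δ₁ + ε₁δ₀ − ε₁δ₁| ≤ 2` for
`±1`-valued `ε, δ`; consequently ND deterministic models have Bell parameter `≤ 2`,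
and so does any convex combination of indicators of ND deterministic models. -/
theorem chsh_deterministic_bound_and_classical_bell_bound :
    (∀ ε δ : Fin 2 → ℤ, (∀ i, ε i = 1 ∨ ε i = -1) → (∀ i, δ i = 1 ∨ δ i = -1) →
      |ε 0 * δ 0 + ε 0 * δ 1 + ε 1 * δ 0 - ε 1 * δ 1| ≤ 2) ∧
    (∀ c : Finset EPRVertex, IsDetModel c → IsND (indicator c) →
      Bell (indicator c) ≤ 2) ∧
    (∀ (q : Finset EPRVertex → ℝ) (p : EPRVertex → ℝ),
      (∀ c, 0 ≤ q c) →
      (∀ c, q c ≠ 0 → IsDetModel c ∧ IsND (indicator c)) →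
      (∑ c : Finset EPRVertex, q c) = 1 →
      (∀ v, p v = ∑ c : Finset EPRVertex, q c * indicator c v) →
      Bell p ≤ 2) := by
  refine ⟨fun ε δ hε hδ => ?_, fun c => Bell_indicator_le_two, fun q p hq hsupp hsum hp => ?_⟩
  · have hunit {u : ℤ} (hu : u = 1 ∨ u = -1) : |u| ≤ 1 := by rcases hu with rfl | rfl <;> simp
    calc _ = |ε 0 * (δ 0 + δ 1) + ε 1 * (δ 0 - δ 1)| := by congr 1; ring
      _ ≤ 2 := abs_chsh_le_two (hunit (hε 0)) (hunit (hε 1)) (hunit (hδ 0)) (hunit (hδ 1))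
  · have hp : p = ∑ c, q c • indicator c := funext fun v => by simp [hp]
    calc Bell p ≤ ∑ c, q c • Bell (indicator c) :=
          hp ▸ convexOn_Bell.map_sum_le (fun c _ => hq c) hsum fun _ _ => Set.mem_univ _
      _ ≤ ∑ c, q c * 2 := by
          refine Finset.sum_le_sum fun c _ => ?_
          rcases eq_or_ne (q c) 0 with h | h
          · simp [h]
          · exact mul_le_mul_of_nonneg_left (Bell_indicator_le_two (hsupp c h).1 (hsupp c h).2)
              (hq c)
      _ = 2 := by rw [← Finset.sum_mul, hsum, one_mul]
end

section
/- For every deterministic model c on the EPR scenario, the Bell parameter of its indicator satisfies B(1_c) ≤ 2 + D(c), where D(c) is the disturbance of c; equality of B(1_c) with 2 is attained whenever D(c) = 0. -/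
/-!
A deterministic model is the graph of an outcome assignment `A : (x, y) ↦ (a, b)`, and its
correlations are the signs `±1`. If neither party's outcome depends on the other party's
setting, the correlations factor as `s x * t y` and the CHSH expression has absolute value `2`.
If, say, `a` depends on `y` at setting `x`, then `h : y ↦ a` is a bijection of `Fin 2`, hence an
involution, and the protocol edges `E^{AB}_{x,h}` and `E^{AB}_{x,rev ∘ h}` meet the model in two
and in no vertices, so `D(c) ≥ 2`; this pays for the trivial bound `4` on the CHSH expression.
-/

open Finset

theorem bell_le_four (p : EPRVertex → ℝ) (hp : ∀ x y, |corr x y p| ≤ 1) : Bell p ≤ 4 := by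
  have h := fun x y => abs_le.mp (hp x y)
  obtain ⟨h00, h00'⟩ := h 0 0
  obtain ⟨h01, h01'⟩ := h 0 1
  obtain ⟨h10, h10'⟩ := h 1 0
  obtain ⟨h11, h11'⟩ := h 1 1
  refine sup'_le _ _ ?_
  simp only [mem_univ, forall_const, Prod.forall, Fin.forall_fin_two, Fin.sum_univ_two, abs_le]
  refine ⟨⟨?_, ?_⟩, ?_, ?_⟩ <;> constructor <;> linarith

theorem abs_chsh_of_factorization {s t : Fin 2 → ℝ} (hs : ∀ x, s x = 1 ∨ s x = -1)
    (ht : ∀ y, t y = 1 ∨ t y = -1) (x y : Fin 2) :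
    |(∑ x' : Fin 2, ∑ y' : Fin 2, s x' * t y') - 2 * (s x * t y)| = 2 := by
  simp only [Fin.sum_univ_two]
  rcases hs 0 with h0 | h0 <;> rcases hs 1 with h1 | h1 <;> rcases ht 0 with k0 | k0 <;>
    rcases ht 1 with k1 | k1 <;> fin_cases x <;> fin_cases y <;> norm_num [h0, h1, k0, k1]

theorem bell_eq_two_of_corr_eq_mul (p : EPRVertex → ℝ) {s t : Fin 2 → ℝ}
    (hs : ∀ x, s x = 1 ∨ s x = -1) (ht : ∀ y, t y = 1 ∨ t y = -1)
    (hp : ∀ x y, corr x y p = s x * t y) : Bell p = 2 := by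
  unfold Bell
  simp only [hp]
  rw [sup'_congr _ rfl fun xy _ => abs_chsh_of_factorization hs ht xy.1 xy.2, sup'_const]

theorem Fin.involutive_of_ne {h : Fin 2 → Fin 2} (hh : h 0 ≠ h 1) : Function.Involutive h := by
  unfold Function.Involutive
  revert h
  decide

theorem two_le_disturbance {c e₁ e₂ : Finset EPRVertex} (h₁ : e₁ ∈ FREdges) (h₂ : e₂ ∈ FREdges)
    (hc₁ : #(c ∩ e₁) = 2) (hc₂ : #(c ∩ e₂) = 0) : 2 ≤ disturbance c := by
  have hne : e₁ ≠ e₂ := by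
    rintro rfl
    omega
  calc 2 = ∑ e ∈ {e₁, e₂}, ((#(c ∩ e) : ℤ) - 1).natAbs := by rw [sum_pair hne, hc₁, hc₂]; rfl
    _ ≤ disturbance c := sum_le_sum_of_subset (by simp [insert_subset_iff, h₁, h₂])

def outcomeGraph (A : Fin 2 × Fin 2 → Fin 2 × Fin 2) : Finset EPRVertex :=
  univ.filter fun v => A (v.2.2.1, v.2.2.2) = (v.1, v.2.1)

def NoSignalling (A : Fin 2 × Fin 2 → Fin 2 × Fin 2) : Prop :=
  (∀ x, (A (x, 0)).1 = (A (x, 1)).1) ∧ ∀ y, (A (0, y)).2 = (A (1, y)).2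

namespace outcomeGraph

variable (A : Fin 2 × Fin 2 → Fin 2 × Fin 2)

@[simp]
theorem mem_iff (a b x y : Fin 2) : (a, b, x, y) ∈ outcomeGraph A ↔ A (x, y) = (a, b) := by
  simp [outcomeGraph]

theorem exists_eq_of_isDetModel {c : Finset EPRVertex} (hc : IsDetModel c) :
    ∃ A, c = outcomeGraph A := by
  choose v hv using fun xy : Fin 2 × Fin 2 => card_eq_one.mp (hc xy.1 xy.2)
  have hmem (a b x y : Fin 2) : (a, b, x, y) ∈ c ↔ (a, b, x, y) = v (x, y) := by
    rw [← mem_singleton, ← hv (x, y)]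
    simp [cartEdge]
  refine ⟨fun xy => ((v xy).1, (v xy).2.1), ?_⟩
  ext ⟨a, b, x, y⟩
  have hxy : v (x, y) ∈ cartEdge x y := mem_of_mem_inter_right (hv (x, y) ▸ mem_singleton_self _)
  simp only [cartEdge, mem_filter, mem_univ, true_and] at hxy
  simp [hmem, Prod.ext_iff, hxy, eq_comm, and_comm]

theorem corr_indicator (x y : Fin 2) :
    corr x y (indicator (outcomeGraph A)) = (-1) ^ ((A (x, y)).1 : ℕ) * (-1) ^ ((A (x, y)).2 : ℕ) := by
  rw [← pow_add]
  unfold corr indicator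
  simp only [mem_iff, Fin.sum_univ_two]
  generalize A (x, y) = ab
  obtain ⟨a, b⟩ := ab
  fin_cases a <;> fin_cases b <;> norm_num

theorem bell_eq_two_of_noSignalling (hA : NoSignalling A) : Bell (indicator (outcomeGraph A)) = 2 := by
  refine bell_eq_two_of_corr_eq_mul _ (s := fun x => (-1) ^ ((A (x, 0)).1 : ℕ))
    (t := fun y => (-1) ^ ((A (0, y)).2 : ℕ)) (fun _ => neg_one_pow_eq_or ℝ _)
    (fun _ => neg_one_pow_eq_or ℝ _) fun x y => ?_
  rw [corr_indicator]
  fin_cases x <;> fin_cases y <;> simp [hA.1, hA.2]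

theorem bell_le_four : Bell (indicator (outcomeGraph A)) ≤ 4 :=
  _root_.bell_le_four _ fun x y => by simp [corr_indicator]

theorem card_inter_edgeAB (x : Fin 2) (f : Fin 2 → Fin 2) :
    #(outcomeGraph A ∩ edgeAB x f) = #{y | f (A (x, y)).1 = y} := by
  refine card_nbij' (fun v => v.2.2.2) (fun y => ((A (x, y)).1, (A (x, y)).2, x, y)) ?_ ?_ ?_ ?_
    <;> intro v <;> aesop (add simp [outcomeGraph, edgeAB])

theorem card_inter_edgeBA (y : Fin 2) (g : Fin 2 → Fin 2) :
    #(outcomeGraph A ∩ edgeBA y g) = #{x | g (A (x, y)).2 = x} := by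
  refine card_nbij' (fun v => v.2.2.1) (fun x => ((A (x, y)).1, (A (x, y)).2, x, y)) ?_ ?_ ?_ ?_
    <;> intro v <;> aesop (add simp [outcomeGraph, edgeBA])

theorem two_le_disturbance_of_not_noSignalling (hA : ¬NoSignalling A) :
    2 ≤ disturbance (outcomeGraph A) := by
  simp only [NoSignalling, not_and_or, not_forall] at hA
  rcases hA with ⟨x, hx⟩ | ⟨y, hy⟩
  · have hinv := Fin.involutive_of_ne (h := fun y => (A (x, y)).1) hx
    refine two_le_disturbance (edgeAB_mem_FREdges x fun y => (A (x, y)).1)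
      (edgeAB_mem_FREdges x fun y => ((A (x, y)).1).rev) ?_ ?_ <;>
      simp [card_inter_edgeAB, hinv _]
  · have hinv := Fin.involutive_of_ne (h := fun x => (A (x, y)).2) hy
    refine two_le_disturbance (edgeBA_mem_FREdges y fun x => (A (x, y)).2)
      (edgeBA_mem_FREdges y fun x => ((A (x, y)).2).rev) ?_ ?_ <;>
      simp [card_inter_edgeBA, hinv _]

end outcomeGraph

/-- for every deterministic model `c`, `B(1_c) ≤ 2 + D(c)`, with
`B(1_c) = 2` whenever `D(c) = 0`. -/
theorem detModel_bell_le_two_add_disturbance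
    (c : Finset EPRVertex) (hc : IsDetModel c) :
    Bell (indicator c) ≤ 2 + (disturbance c : ℝ) ∧
    (disturbance c = 0 → Bell (indicator c) = 2) := by
  obtain ⟨A, rfl⟩ := outcomeGraph.exists_eq_of_isDetModel hc
  by_cases hA : NoSignalling A
  · have hBell := outcomeGraph.bell_eq_two_of_noSignalling A hA
    exact ⟨hBell.trans_le (le_add_of_nonneg_right (Nat.cast_nonneg _)), fun _ => hBell⟩
  · have hD := outcomeGraph.two_le_disturbance_of_not_noSignalling A hA
    refine ⟨(outcomeGraph.bell_le_four A).trans ?_, fun h => by omega⟩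
    have : (2 : ℝ) ≤ disturbance (outcomeGraph A) := by exact_mod_cast hD
    linarith
end

section
/- For the deterministic models c₀ = {(0,0,0,0),(0,1,0,1),(0,0,1,0),(1,1,1,1)} and c₁ = {(1,1,0,0),(1,0,0,1),(1,1,1,0),(0,0,1,1)} on the EPR scenario, the disturbances satisfy D(c₀) = 2 and D(c₁) = 2; consequently, for the Popescu–Rohrlich box p_PR = (1/2)·1_{c₀} + (1/2)·1_{c₁}, the Bell parameter minus the total weighted disturbance equals the classical bound: B(p_PR) − ((1/2)·D(c₀) + (1/2)·D(c₁)) = 2. -/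
/-- The first deterministic model in the PR-box decomposition. -/
def c₀ : Finset EPRVertex := {(0,0,0,0), (0,1,0,1), (0,0,1,0), (1,1,1,1)}

/-- The second deterministic model in the PR-box decomposition. -/
def c₁ : Finset EPRVertex := {(1,1,0,0), (1,0,0,1), (1,1,1,0), (0,0,1,1)}

/-- The Popescu–Rohrlich box: `p(a,b,x,y) = 1/2` if `a + b = (1+x)·y (mod 2)`, else 0. -/
noncomputable def pPR : EPRVertex → ℝ := fun v =>
  if v.1 + v.2.1 = (1 + v.2.2.1) * v.2.2.2 then 1 / 2 else 0

/-! In both `c₀` and `c₁` Alice's outcome at setting `x = 1` changes with Bob's setting `y`, while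
all other one-party outcomes are setting-independent. Hence the only disturbed Foulis–Randall edges
are the two protocol edges `E^{AB}_{1,f}` with `f` non-constant: one meets the model in two vertices,
the other in none, so `D(c₀) = D(c₁) = 2`. The PR box has correlation `+1` at every pair of settings
except `(0, 1)`, where it is `-1`; so the correlations sum to `2` and `B(p_PR) = |2 - 2·(-1)| = 4`. -/

theorem corr_pPR (x y : Fin 2) : corr x y pPR = if x = 0 ∧ y = 1 then -1 else 1 := by
  have two_eq_zero : (1 + 1 : Fin 2) = 0 := rfl
  fin_cases x <;> fin_cases y <;> norm_num [corr, pPR, Fin.sum_univ_two, two_eq_zero]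

theorem sum_corr_pPR : ∑ x : Fin 2, ∑ y : Fin 2, corr x y pPR = 2 := by
  norm_num [Fin.sum_univ_two, corr_pPR]

theorem Bell_le_iff_s13 {p : EPRVertex → ℝ} {t : ℝ} :
    Bell p ≤ t ↔ ∀ x y : Fin 2, |(∑ x' : Fin 2, ∑ y' : Fin 2, corr x' y' p) - 2 * corr x y p| ≤ t := by
  simp [Bell, Finset.sup'_le_iff]

theorem le_Bell (p : EPRVertex → ℝ) (x y : Fin 2) :
    |(∑ x' : Fin 2, ∑ y' : Fin 2, corr x' y' p) - 2 * corr x y p| ≤ Bell p :=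
  Bell_le_iff_s13.1 le_rfl x y

theorem Bell_pPR : Bell pPR = 4 := by
  refine le_antisymm (Bell_le_iff_s13.2 fun x y => ?_) ?_
  · rw [sum_corr_pPR, corr_pPR]
    split_ifs <;> norm_num
  · calc (4 : ℝ) = |2 - 2 * corr 0 1 pPR| := by norm_num [corr_pPR]
      _ ≤ Bell pPR := sum_corr_pPR ▸ le_Bell pPR 0 1

theorem disturbance_c₀ : disturbance c₀ = 2 := by decide

theorem disturbance_c₁ : disturbance c₁ = 2 := by decide

/-- `D(c₀) = D(c₁) = 2`, and for the PR box
`B(p_PR) − (½·D(c₀) + ½·D(c₁)) = 2`, the classical bound. -/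
theorem pr_box_bell_minus_weighted_disturbance_eq_two :
    disturbance c₀ = 2 ∧ disturbance c₁ = 2 ∧
    Bell pPR - ((1 / 2) * (disturbance c₀ : ℝ) + (1 / 2) * (disturbance c₁ : ℝ)) = 2 := by
  refine ⟨disturbance_c₀, disturbance_c₁, ?_⟩
  rw [Bell_pPR, disturbance_c₀, disturbance_c₁]
  norm_num
end
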